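/- The statistic MMD_u²(X, X') = (1/(m(m−1))) Σ_{i≠j} k(x_i, x_j) − (2/(mn)) Σ_{i,j} k(x_i, x'_j) + (1/(n(n−1))) Σ_{i≠j} k(x'_i, x'_j) is an unbiased estimator of MMD²(P,Q): its expectation over i.i.d. samples x_1,...,x_m ~ P and x'_1,...,x'_n ~ Q equals MMD²(P,Q). -/

import Mathlib

/-!
Any two distinct coordinates of the joint sample `(x, x')` are independent, so the law of such a
pair is the product of its marginals: `E k(x_i, x_j) = E_{P×P} k` for `i ≠ j`,
`E k(x_i, x'_j) = E_{P×Q} k` and `E k(x'_i, x'_j) = E_{Q×Q} k` for `i ≠ j`. The three sums have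
`m(m−1)`, `mn` and `n(n−1)` terms, exactly the normalising constants, so linearity of
expectation gives the claim.
-/

open MeasureTheory ProbabilityTheory Finset

section Pairs

variable {Ω ι X E : Type*} [MeasurableSpace Ω] [MeasurableSpace X]
  [NormedAddCommGroup E] [NormedSpace ℝ E] {μ : Measure Ω} [IsFiniteMeasure μ]
  {Y : ι → Ω → X} {i j : ι} {ν₁ ν₂ : Measure X} {φ : X × X → E}

lemma ProbabilityTheory.iIndepFun.map_pair_eq_prod (h : iIndepFun Y μ)
    (hY : ∀ i, AEMeasurable (Y i) μ) (hij : i ≠ j) (hi : μ.map (Y i) = ν₁)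
    (hj : μ.map (Y j) = ν₂) :
    μ.map (fun ω => (Y i ω, Y j ω)) = ν₁.prod ν₂ := by
  rw [(h.indepFun hij).map_prod_eq_prod_map_map (hY i) (hY j), hi, hj]

lemma ProbabilityTheory.iIndepFun.integrable_and_integral_comp_pair (h : iIndepFun Y μ)
    (hY : ∀ i, AEMeasurable (Y i) μ) (hij : i ≠ j) (hi : μ.map (Y i) = ν₁)
    (hj : μ.map (Y j) = ν₂) (hφ : Integrable φ (ν₁.prod ν₂)) :
    Integrable (fun ω => φ (Y i ω, Y j ω)) μ ∧
      ∫ ω, φ (Y i ω, Y j ω) ∂μ = ∫ p, φ p ∂(ν₁.prod ν₂) := by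
  rw [← h.map_pair_eq_prod hY hij hi hj] at hφ ⊢
  exact ⟨hφ.comp_aemeasurable ((hY i).prodMk (hY j)),
    (integral_map ((hY i).prodMk (hY j)) hφ.1).symm⟩

end Pairs

section Sums

variable {Ω ι κ : Type*} [MeasurableSpace Ω] {μ : Measure Ω} {c : ℝ}

lemma integrable_and_integral_finsetSum_of_integral_eq (s : Finset ι) {F : ι → Ω → ℝ}
    (hF : ∀ i ∈ s, Integrable (F i) μ ∧ ∫ ω, F i ω ∂μ = c) :
    Integrable (fun ω => ∑ i ∈ s, F i ω) μ ∧ ∫ ω, ∑ i ∈ s, F i ω ∂μ = #s * c := by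
  refine ⟨integrable_finsetSum s fun i hi => (hF i hi).1, ?_⟩
  rw [integral_finsetSum s fun i hi => (hF i hi).1, sum_congr rfl fun i hi => (hF i hi).2,
    sum_const, nsmul_eq_mul]

variable [Fintype ι] [Fintype κ]

lemma integrable_and_integral_sum_sum_of_integral_eq {F : ι → κ → Ω → ℝ}
    (hF : ∀ i j, Integrable (F i j) μ ∧ ∫ ω, F i j ω ∂μ = c) :
    Integrable (fun ω => ∑ i, ∑ j, F i j ω) μ ∧
      ∫ ω, ∑ i, ∑ j, F i j ω ∂μ = Fintype.card ι * Fintype.card κ * c := by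
  rw [card_univ.symm, card_univ.symm, mul_assoc]
  exact integrable_and_integral_finsetSum_of_integral_eq _ fun i _ =>
    integrable_and_integral_finsetSum_of_integral_eq _ fun j _ => hF i j

lemma integrable_and_integral_sum_sum_ne_of_integral_eq [DecidableEq ι] {F : ι → ι → Ω → ℝ}
    (hF : ∀ i j, i ≠ j → Integrable (F i j) μ ∧ ∫ ω, F i j ω ∂μ = c) :
    Integrable (fun ω => ∑ i, ∑ j with j ≠ i, F i j ω) μ ∧
      ∫ ω, ∑ i, ∑ j with j ≠ i, F i j ω ∂μ = Fintype.card ι * (Fintype.card ι - 1) * c := by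
  rw [mul_assoc, ← card_univ]
  refine integrable_and_integral_finsetSum_of_integral_eq _ fun i hi => ?_
  have hcard : (#(univ : Finset ι) : ℝ) - 1 = #({j | j ≠ i} : Finset ι) := by
    rw [filter_ne', card_erase_of_mem hi, Nat.cast_pred (card_pos.mpr ⟨i, hi⟩)]
  rw [hcard]
  exact integrable_and_integral_finsetSum_of_integral_eq _ fun j hj =>
    hF i j (mem_filter.mp hj).2.symm

end Sums

theorem stmt9_general {Ω X : Type*} [MeasurableSpace Ω] [MeasurableSpace X]
    (μ : Measure Ω) [IsProbabilityMeasure μ]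
    (P Q : Measure X)
    (m n : ℕ) (hm : 2 ≤ m) (hn : 2 ≤ n)
    (x : Fin m → Ω → X) (x' : Fin n → Ω → X)
    (hxm : ∀ i, Measurable (x i)) (hx'm : ∀ j, Measurable (x' j))
    (hindep : iIndepFun (β := fun _ : Fin m ⊕ Fin n => X)
      (Sum.elim x x') μ)
    (hxP : ∀ i, Measure.map (x i) μ = P)
    (hx'Q : ∀ j, Measure.map (x' j) μ = Q)
    (k : X → X → ℝ)
    (hkPP : Integrable (fun p => k p.1 p.2) (P.prod P))
    (hkPQ : Integrable (fun p => k p.1 p.2) (P.prod Q))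
    (hkQQ : Integrable (fun p => k p.1 p.2) (Q.prod Q)) :
    (∫ ω, ((1 / (m * (m - 1) : ℝ)) *
          ∑ i : Fin m, ∑ j : Fin m with j ≠ i, k (x i ω) (x j ω)
        - (2 / (m * n : ℝ)) * ∑ i : Fin m, ∑ j : Fin n, k (x i ω) (x' j ω)
        + (1 / (n * (n - 1) : ℝ)) *
            ∑ i : Fin n, ∑ j : Fin n with j ≠ i, k (x' i ω) (x' j ω)) ∂μ) =
      (∫ p, k p.1 p.2 ∂(P.prod P)) - 2 * (∫ p, k p.1 p.2 ∂(P.prod Q)) +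
        ∫ p, k p.1 p.2 ∂(Q.prod Q) := by
  have hy : ∀ a, AEMeasurable (Sum.elim x x' a) μ :=
    Sum.forall.2 ⟨fun i => (hxm i).aemeasurable, fun j => (hx'm j).aemeasurable⟩
  obtain ⟨hPP, ePP⟩ := integrable_and_integral_sum_sum_ne_of_integral_eq
    (F := fun i j ω => k (x i ω) (x j ω)) fun i j hij =>
      hindep.integrable_and_integral_comp_pair hy (Sum.inl_injective.ne hij) (hxP i) (hxP j) hkPP
  obtain ⟨hPQ, ePQ⟩ := integrable_and_integral_sum_sum_of_integral_eq
    (F := fun i j ω => k (x i ω) (x' j ω)) fun i j =>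
      hindep.integrable_and_integral_comp_pair hy Sum.inl_ne_inr (hxP i) (hx'Q j) hkPQ
  obtain ⟨hQQ, eQQ⟩ := integrable_and_integral_sum_sum_ne_of_integral_eq
    (F := fun i j ω => k (x' i ω) (x' j ω)) fun i j hij =>
      hindep.integrable_and_integral_comp_pair hy (Sum.inr_injective.ne hij) (hx'Q i) (hx'Q j) hkQQ
  have hm1 : (m : ℝ) - 1 ≠ 0 := sub_ne_zero.2 (mod_cast (by omega : m ≠ 1))
  have hn1 : (n : ℝ) - 1 ≠ 0 := sub_ne_zero.2 (mod_cast (by omega : n ≠ 1))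
  rw [integral_add ?_ (hQQ.const_mul _), integral_sub (hPP.const_mul _) (hPQ.const_mul _),
    integral_const_mul, integral_const_mul, integral_const_mul, ePP, ePQ, eQQ]
  · simp only [Fintype.card_fin]
    field_simp
  · exact (hPP.const_mul _).sub (hPQ.const_mul _)

/-- The U-statistic
`MMD_u² = (1/(m(m−1))) ∑_{i≠j} k(x_i,x_j) − (2/(mn)) ∑_{i,j} k(x_i,x'_j)
          + (1/(n(n−1))) ∑_{i≠j} k(x'_i,x'_j)`
is an unbiased estimator of the population squared MMD: for mutually independent samples
`x_1,…,x_m ∼ P` and `x'_1,…,x'_n ∼ Q` (i.i.d., the two samples independent), its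
expectation equals `E_{P×P}[k] − 2 E_{P×Q}[k] + E_{Q×Q}[k]`. -/
theorem stmt9 {Ω X : Type*} [MeasurableSpace Ω] [MeasurableSpace X]
    (μ : Measure Ω) [IsProbabilityMeasure μ]
    (P Q : Measure X) [IsProbabilityMeasure P] [IsProbabilityMeasure Q]
    (m n : ℕ) (hm : 2 ≤ m) (hn : 2 ≤ n)
    (x : Fin m → Ω → X) (x' : Fin n → Ω → X)
    (hxm : ∀ i, Measurable (x i)) (hx'm : ∀ j, Measurable (x' j))
    (hindep : iIndepFun (β := fun _ : Fin m ⊕ Fin n => X)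
      (Sum.elim x x') μ)
    (hxP : ∀ i, Measure.map (x i) μ = P)
    (hx'Q : ∀ j, Measure.map (x' j) μ = Q)
    (k : X → X → ℝ) (hkm : Measurable (Function.uncurry k))
    (hkPP : Integrable (fun p => k p.1 p.2) (P.prod P))
    (hkPQ : Integrable (fun p => k p.1 p.2) (P.prod Q))
    (hkQQ : Integrable (fun p => k p.1 p.2) (Q.prod Q))
    (hstat : Integrable (fun ω =>
      (1 / (m * (m - 1) : ℝ)) * ∑ i : Fin m, ∑ j : Fin m with j ≠ i, k (x i ω) (x j ω)
        - (2 / (m * n : ℝ)) * ∑ i : Fin m, ∑ j : Fin n, k (x i ω) (x' j ω)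
        + (1 / (n * (n - 1) : ℝ)) *
            ∑ i : Fin n, ∑ j : Fin n with j ≠ i, k (x' i ω) (x' j ω)) μ) :
    (∫ ω, ((1 / (m * (m - 1) : ℝ)) *
          ∑ i : Fin m, ∑ j : Fin m with j ≠ i, k (x i ω) (x j ω)
        - (2 / (m * n : ℝ)) * ∑ i : Fin m, ∑ j : Fin n, k (x i ω) (x' j ω)
        + (1 / (n * (n - 1) : ℝ)) *
            ∑ i : Fin n, ∑ j : Fin n with j ≠ i, k (x' i ω) (x' j ω)) ∂μ) =
      (∫ p, k p.1 p.2 ∂(P.prod P)) - 2 * (∫ p, k p.1 p.2 ∂(P.prod Q)) +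
        ∫ p, k p.1 p.2 ∂(Q.prod Q) :=
  stmt9_general μ P Q m n hm hn x x' hxm hx'm hindep hxP hx'Q k hkPP hkPQ hkQQ
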